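/- arXiv:1909.13771 — 4 statements merged into one kernel-verified Lean document; each statement's English description precedes it below -/
import Mathlib

section
/- Let 0 ≤ t ≤ 3/8 and let ν_t be the left-down measure with parameter t on ℤ². Then ν_t-almost surely, every connected component of the random open subgraph is finite. -/
open MeasureTheory ProbabilityTheory

namespace OneIndep

variable {V : Type*}

/-- The configuration space of a bond percolation model on `G`: each edge of `G` is
either open (`true`) or closed (`false`). A configuration is identified with the
spanning subgraph consisting of its open edges. -/
abbrev Config (G : SimpleGraph V) : Type _ := G.edgeSet → Bool

/-- The set of endpoints of edges belonging to an edge set `F`. -/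
def endpointsOf (F : Set (Sym2 V)) : Set V := {v | ∃ e ∈ F, v ∈ e}

/-- Two edge sets are `k`-distant in `G` if they are disjoint and every walk in `G` from an
endpoint of an edge of `F₁` to an endpoint of an edge of `F₂` has length at least `k`.
For `k = 1` this says precisely that `F₁` and `F₂` are disjoint and no edge of `F₁` shares
an endpoint with an edge of `F₂`. -/
def KDistant (G : SimpleGraph V) (k : ℕ) (F₁ F₂ : Set (Sym2 V)) : Prop :=
  Disjoint F₁ F₂ ∧
    ∀ u ∈ endpointsOf F₁, ∀ v ∈ endpointsOf F₂, ∀ w : G.Walk u v, k ≤ w.length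

/-- The sub-σ-algebra of the configuration space generated by the states of the edges
belonging to `F`. -/
def cylinderSigma (G : SimpleGraph V) (F : Set (Sym2 V)) : MeasurableSpace (Config G) :=
  MeasurableSpace.comap (fun ω (e : {e : G.edgeSet // (e : Sym2 V) ∈ F}) => ω e) inferInstance

/-- A measure on the configuration space of `G` is `k`-independent if the states of any two
`k`-distant edge sets are independent. -/
def KIndepMeasure (G : SimpleGraph V) (k : ℕ) (μ : Measure (Config G)) : Prop :=
  ∀ F₁ F₂ : Set (Sym2 V), F₁ ⊆ G.edgeSet → F₂ ⊆ G.edgeSet → KDistant G k F₁ F₂ →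
    Indep (cylinderSigma G F₁) (cylinderSigma G F₂) μ

/-- `MGe G k p` is the collection of `k`-independent bond percolation measures on `G` in which
every edge is open with probability at least `p`. -/
def MGe (G : SimpleGraph V) (k : ℕ) (p : ℝ) : Set (Measure (Config G)) :=
  {μ | IsProbabilityMeasure μ ∧ KIndepMeasure G k μ ∧
    ∀ e : G.edgeSet, ENNReal.ofReal p ≤ μ {ω | ω e = true}}

/-- `MLe G k p` is the collection of `k`-independent bond percolation measures on `G` in which
every edge is open with probability at most `p`. -/
def MLe (G : SimpleGraph V) (k : ℕ) (p : ℝ) : Set (Measure (Config G)) :=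
  {μ | IsProbabilityMeasure μ ∧ KIndepMeasure G k μ ∧
    ∀ e : G.edgeSet, μ {ω | ω e = true} ≤ ENNReal.ofReal p}

/-- The spanning subgraph of `G` consisting of the open edges of the configuration `ω`. -/
def openSubgraph (G : SimpleGraph V) (ω : Config G) : SimpleGraph V :=
  SimpleGraph.fromEdgeSet {e | ∃ h : e ∈ G.edgeSet, ω ⟨e, h⟩ = true}

/-- Percolation: the open subgraph contains an infinite connected component. -/
def Percolates (G : SimpleGraph V) (ω : Config G) : Prop :=
  ∃ v : V, {w | (openSubgraph G ω).Reachable v w}.Infinite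

/-- The Harris critical probability for 1-independent percolation on `G`. -/
noncomputable def harrisCrit (G : SimpleGraph V) : ℝ :=
  sInf {p | p ∈ Set.Icc (0:ℝ) 1 ∧ ∀ μ ∈ MGe G 1 p, μ {ω | Percolates G ω} = 1}

/-- The open subgraph contains a path of length `n`. -/
def HasOpenPathOfLength (G : SimpleGraph V) (ω : Config G) (n : ℕ) : Prop :=
  ∃ (u v : V) (w : (openSubgraph G ω).Walk u v), w.IsPath ∧ w.length = n

/-- The long paths critical probability for 1-independent percolation on `G`. -/
noncomputable def longPathsCrit (G : SimpleGraph V) : ℝ :=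
  sInf {p | p ∈ Set.Icc (0:ℝ) 1 ∧
    ∀ μ ∈ MGe G 1 p, ∀ n : ℕ, 0 < μ {ω | HasOpenPathOfLength G ω n}}

/-- The `k`-independent connectivity function `f_{k,G}(p)`: the infimum over all
`k`-independent measures with edge-probability at least `p` of the probability that the
random spanning subgraph is connected. -/
noncomputable def connFun (G : SimpleGraph V) (k : ℕ) (p : ℝ) : ℝ :=
  sInf {x | ∃ μ ∈ MGe G k p, x = (μ {ω | (openSubgraph G ω).Connected}).toReal}

/-- The maximal `k`-independent connectivity function `F_{k,G}(p)`: the supremum over all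
`k`-independent measures with edge-probability at most `p` of the probability that the
random spanning subgraph is connected. -/
noncomputable def connFunMax (G : SimpleGraph V) (k : ℕ) (p : ℝ) : ℝ :=
  sSup {x | ∃ μ ∈ MLe G k p, x = (μ {ω | (openSubgraph G ω).Connected}).toReal}

/-- The line lattice `ℤ`: the two-way infinite path. -/
def lineLattice : SimpleGraph ℤ := SimpleGraph.fromRel (fun x y => y = x + 1)

/-- The hypercubic lattice `ℤ^d`. -/
def hypercubicLattice (d : ℕ) : SimpleGraph (Fin d → ℤ) :=
  SimpleGraph.fromRel (fun x y => ∑ i, (x i - y i).natAbs = 1)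

/-- The square lattice `ℤ²`. -/
def squareLattice : SimpleGraph (ℤ × ℤ) :=
  SimpleGraph.fromRel (fun x y => (x.1 - y.1).natAbs + (x.2 - y.2).natAbs = 1)


/-- Vertex states for the left-down measure: `0 = L`, `1 = D`, `2 = Off`. -/
abbrev LDState : Type := Fin 3

/-- A measure `ν` on state configurations of `ℤ²` is the left-down measure with parameter
`t` if it is a probability measure under which the vertex states are i.i.d., each vertex
being in state `L` with probability `t`, state `D` with probability `t` and state `Off`
with probability `1 - 2t` (expressed via cylinder events). -/
def IsLeftDownMeasure (t : ℝ) (ν : Measure ((ℤ × ℤ) → LDState)) : Prop :=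
  IsProbabilityMeasure ν ∧ ∀ (s : Finset (ℤ × ℤ)) (f : (ℤ × ℤ) → LDState),
    ν {σ | ∀ v ∈ s, σ v = f v} =
      ∏ v ∈ s, (if f v = 2 then ENNReal.ofReal (1 - 2 * t) else ENNReal.ofReal t)

/-- The open subgraph of `ℤ²` determined by a left-down state configuration: if a vertex is
in state `L` (`0`) the edge to its left is open, if it is in state `D` (`1`) the edge below
it is open; all other edges are closed. -/
def leftDownSubgraph (σ : (ℤ × ℤ) → LDState) : SimpleGraph (ℤ × ℤ) :=
  SimpleGraph.fromRel (fun u v =>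
    (σ u = 0 ∧ v = (u.1 - 1, u.2)) ∨ (σ u = 1 ∧ v = (u.1, u.2 - 1)))

end OneIndep

/-!
Every vertex opens at most one edge. Hence, once a self-avoiding open path `u₀, …, uₙ` uses an
edge opened by its far endpoint, so do all its later edges: the path follows edges opened by
`u₀, …, u_{k-1}` and then edges opened by `u_{k+1}, …, uₙ`. It is thus determined by `u₀`, the
turning index `k` and the states (`L` or `D`) of these `n` distinct vertices, which occur with
probability `tⁿ`. An infinite cluster at `v` contains such paths of every length `n`, so its
probability is at most `(n + 1) (2t)ⁿ → 0` for `t < 1/2`.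
-/

open scoped ENNReal
open Filter Topology

theorem Nat.exists_forall_iff_lt_of_succ_imp {P : ℕ → Prop} {n : ℕ}
    (hP : ∀ i, i + 1 < n → P (i + 1) → P i) : ∃ k ≤ n, ∀ i < n, P i ↔ i < k := by
  induction n with
  | zero => exact ⟨0, le_rfl, fun i hi => absurd hi (Nat.not_lt_zero i)⟩
  | succ n ih =>
    obtain ⟨k, hkn, hk⟩ := ih fun i hi => hP i (by omega)
    by_cases hPn : P n
    · refine ⟨n + 1, le_rfl, fun i hi => iff_of_true ?_ hi⟩
      rcases Nat.lt_succ_iff_lt_or_eq.1 hi with hi | rfl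
      · have hk' : n - 1 < k := (hk (n - 1) (by omega)).1
          (hP (n - 1) (by omega) (by rwa [Nat.sub_add_cancel (by omega)]))
        exact (hk i hi).2 (by omega)
      · exact hPn
    · refine ⟨k, by omega, fun i hi => ?_⟩
      rcases Nat.lt_succ_iff_lt_or_eq.1 hi with hi | rfl
      · exact hk i hi
      · exact iff_of_false hPn (by omega)

namespace SimpleGraph

variable {V : Type*} {G : SimpleGraph V}

theorem Walk.dist_le_length [PseudoMetricSpace V] (hG : ∀ ⦃a b⦄, G.Adj a b → Dist.dist a b ≤ 1)
    {u v : V} (p : G.Walk u v) : Dist.dist u v ≤ p.length := by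
  induction p with
  | nil => simp
  | @cons a b c h p ih =>
    rw [Walk.length_cons, Nat.cast_succ]
    linarith [dist_triangle a b c, hG h]

theorem exists_isPath_le_length [MetricSpace V] [ProperSpace V] [DiscreteTopology V]
    (hG : ∀ ⦃a b⦄, G.Adj a b → Dist.dist a b ≤ 1) {v : V} (hv : {w | G.Reachable v w}.Infinite)
    (n : ℕ) : ∃ (w : V) (p : G.Walk v w), p.IsPath ∧ n ≤ p.length := by
  classical
  obtain ⟨w, ⟨q⟩, hw⟩ := (hv.sdiff (isCompact_closedBall v n).finite_of_discrete).nonempty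
  refine ⟨w, q.bypass, q.bypass_isPath, ?_⟩
  rw [Metric.mem_closedBall, not_le, _root_.dist_comm] at hw
  exact_mod_cast (hw.trans_le (q.bypass.dist_le_length hG)).le

end SimpleGraph

namespace OneIndep

/-- A bit encodes a state other than `Off`: `false` is `L`, `true` is `D`. -/
def bitState (b : Bool) : LDState := if b then 1 else 0

def bitDir (b : Bool) : ℤ × ℤ := if b then (0, 1) else (1, 0)

def OpensTo (σ : (ℤ × ℤ) → LDState) (u v : ℤ × ℤ) : Prop :=
  ∃ b, σ u = bitState b ∧ v = u - bitDir b

theorem bitState_ne_two (b : Bool) : bitState b ≠ 2 := by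
  cases b <;> decide

theorem bitState_injective : Function.Injective bitState := by
  intro a b; cases a <;> cases b <;> decide

theorem norm_bitDir (b : Bool) : ‖bitDir b‖ = 1 := by
  cases b <;> simp [bitDir]

section LeftDown

variable {σ : (ℤ × ℤ) → LDState} {u v w : ℤ × ℤ}

theorem opensTo_iff : OpensTo σ u v ↔
    (σ u = 0 ∧ v = (u.1 - 1, u.2)) ∨ (σ u = 1 ∧ v = (u.1, u.2 - 1)) := by
  simp [OpensTo, bitState, bitDir, Prod.ext_iff]

theorem OpensTo.ne (h : OpensTo σ u v) : u ≠ v := by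
  obtain ⟨b, -, rfl⟩ := h
  cases b <;> simp [bitDir, Prod.ext_iff] <;> omega

theorem OpensTo.eq (h₁ : OpensTo σ u v) (h₂ : OpensTo σ u w) : v = w := by
  obtain ⟨b, hb, rfl⟩ := h₁
  obtain ⟨b', hb', rfl⟩ := h₂
  rw [bitState_injective (hb.symm.trans hb')]

theorem leftDownSubgraph_adj_iff :
    (leftDownSubgraph σ).Adj u v ↔ OpensTo σ u v ∨ OpensTo σ v u := by
  rw [leftDownSubgraph, SimpleGraph.fromRel_adj, ← opensTo_iff, ← opensTo_iff]
  exact ⟨And.right, fun h => ⟨h.elim OpensTo.ne fun h => h.ne.symm, h⟩⟩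

theorem dist_le_one_of_leftDownSubgraph_adj (h : (leftDownSubgraph σ).Adj u v) :
    dist u v ≤ 1 := by
  rcases leftDownSubgraph_adj_iff.1 h with ⟨b, -, rfl⟩ | ⟨b, -, rfl⟩
  · rw [dist_self_sub_right, norm_bitDir]
  · rw [dist_comm, dist_self_sub_right, norm_bitDir]

end LeftDown

section Path

variable {σ : (ℤ × ℤ) → LDState} {v w : ℤ × ℤ} {p : (leftDownSubgraph σ).Walk v w}

theorem not_opensTo_of_isPath (hp : p.IsPath) {i : ℕ} (hi : i + 2 ≤ p.length)
    (h : OpensTo σ (p.getVert (i + 1)) (p.getVert i)) :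
    ¬ OpensTo σ (p.getVert (i + 1)) (p.getVert (i + 2)) := fun h' =>
  absurd (hp.getVert_injOn (by simp; omega) (by simp; omega) (h.eq h')) (by omega)

theorem exists_turn_of_isPath (hp : p.IsPath) {n : ℕ} (hn : n ≤ p.length) :
    ∃ k ≤ n, ∀ i < n, OpensTo σ (p.getVert i) (p.getVert (i + 1)) ↔ i < k := by
  refine Nat.exists_forall_iff_lt_of_succ_imp fun i hi h => ?_
  by_contra hi'
  have hback := (leftDownSubgraph_adj_iff.1 (p.adj_getVert_succ (by omega))).resolve_left hi'
  exact not_opensTo_of_isPath hp (by omega) hback h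

end Path

section Code

variable {n : ℕ}

def codeStep (k : Fin (n + 1)) (c : Fin n → Bool) (i : Fin n) : ℤ × ℤ :=
  if i.castSucc < k then -bitDir (c i) else bitDir (c i)

def codeVertex (v : ℤ × ℤ) (k : Fin (n + 1)) (c : Fin n → Bool) (j : Fin (n + 1)) : ℤ × ℤ :=
  v + Fin.partialSum (codeStep k c) j

/-- The path coded by `k` and `c` has vertices `codeVertex v k c`; its `i`-th edge is opened by
the vertex `k.succAbove i`, in state `bitState (c i)`. -/
def codeEvent (v : ℤ × ℤ) (k : Fin (n + 1)) (c : Fin n → Bool) : Set ((ℤ × ℤ) → LDState) :=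
  {σ | Function.Injective (codeVertex v k c ∘ k.succAbove) ∧
    ∀ i, σ (codeVertex v k c (k.succAbove i)) = bitState (c i)}

theorem exists_mem_codeEvent_of_isPath {σ : (ℤ × ℤ) → LDState} {v w : ℤ × ℤ}
    {p : (leftDownSubgraph σ).Walk v w} (hp : p.IsPath) (hn : n ≤ p.length) :
    ∃ (k : Fin (n + 1)) (c : Fin n → Bool), σ ∈ codeEvent v k c := by
  obtain ⟨k, hkn, hk⟩ := exists_turn_of_isPath hp hn
  set u : Fin (n + 1) → ℤ × ℤ := fun j => p.getVert j with hu
  set K : Fin (n + 1) := ⟨k, by omega⟩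
  have hstep : ∀ i : Fin n, ∃ b, σ (u (K.succAbove i)) = bitState b ∧
      (if i.castSucc < K then -bitDir b else bitDir b) = -u i.castSucc + u i.succ := by
    intro i
    by_cases hik : i.castSucc < K
    · obtain ⟨b, hb, he⟩ := (hk i i.2).2 hik
      refine ⟨b, by simpa [Fin.succAbove_of_castSucc_lt _ _ hik, hu] using hb, ?_⟩
      simp only [if_pos hik, hu, Fin.val_castSucc, Fin.val_succ, he]
      abel
    · obtain ⟨b, hb, he⟩ := ((leftDownSubgraph_adj_iff.1
        (p.adj_getVert_succ (by omega))).resolve_left (mt (hk i i.2).1 hik))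
      refine ⟨b, by simpa [Fin.succAbove_of_le_castSucc _ _ (not_lt.1 hik), hu] using hb, ?_⟩
      simp only [if_neg hik, hu, Fin.val_castSucc, Fin.val_succ, he]
      abel
  choose c hc using hstep
  have hvertex : codeVertex v K c = u := by
    have hsteps : codeStep K c = fun i => -u i.castSucc + u i.succ := funext fun i => (hc i).2
    funext j
    rw [codeVertex, hsteps]
    conv_rhs => rw [← Fin.partialSum_left_neg u]
    simp [hu]
  have hu_inj : Function.Injective u := fun a b hab =>
    Fin.ext (hp.getVert_injOn (by simp; omega) (by simp; omega) hab)
  refine ⟨K, c, ?_, fun i => ?_⟩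
  · rw [hvertex]
    exact hu_inj.comp Fin.succAbove_right_injective
  · rw [hvertex]
    exact (hc i).1

end Code

namespace IsLeftDownMeasure

variable {t : ℝ} {ν : Measure ((ℤ × ℤ) → LDState)}

theorem measure_forall_eq (hν : IsLeftDownMeasure t ν) {ι : Type*} [Fintype ι]
    {g : ι → ℤ × ℤ} (hg : Function.Injective g) {c : ι → LDState} (hc : ∀ i, c i ≠ 2) :
    ν {σ | ∀ i, σ (g i) = c i} = ENNReal.ofReal t ^ Fintype.card ι := by
  classical
  have hset : {σ : (ℤ × ℤ) → LDState | ∀ i, σ (g i) = c i} =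
      {σ | ∀ u ∈ Finset.univ.image g, σ u = Function.extend g c (fun _ => 2) u} := by
    ext σ
    simp [hg.extend_apply]
  rw [hset, hν.2, Finset.prod_image fun i _ j _ h => hg h]
  simp [hg.extend_apply, hc]

theorem measure_codeEvent_le (hν : IsLeftDownMeasure t ν) {n : ℕ} (v : ℤ × ℤ)
    (k : Fin (n + 1)) (c : Fin n → Bool) : ν (codeEvent v k c) ≤ ENNReal.ofReal t ^ n := by
  by_cases hinj : Function.Injective (codeVertex v k c ∘ k.succAbove)
  · calc ν (codeEvent v k c)
        ≤ ν {σ | ∀ i, σ ((codeVertex v k c ∘ k.succAbove) i) = bitState (c i)} :=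
          measure_mono fun σ hσ => hσ.2
      _ = ENNReal.ofReal t ^ n := by
          rw [hν.measure_forall_eq hinj fun i => bitState_ne_two _, Fintype.card_fin]
  · simp [codeEvent, hinj]

theorem measure_reachable_infinite_le (hν : IsLeftDownMeasure t ν) (v : ℤ × ℤ) (n : ℕ) :
    ν {σ | {w | (leftDownSubgraph σ).Reachable v w}.Infinite} ≤
      (n + 1) * 2 ^ n * ENNReal.ofReal t ^ n := by
  have hcover : {σ | {w | (leftDownSubgraph σ).Reachable v w}.Infinite} ⊆
      ⋃ (k : Fin (n + 1)) (c : Fin n → Bool), codeEvent v k c := by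
    intro σ hσ
    obtain ⟨w, p, hp, hn⟩ := SimpleGraph.exists_isPath_le_length
      (fun _ _ => dist_le_one_of_leftDownSubgraph_adj) hσ n
    obtain ⟨k, c, hkc⟩ := exists_mem_codeEvent_of_isPath hp hn
    exact Set.mem_iUnion₂.2 ⟨k, c, hkc⟩
  calc ν {σ | {w | (leftDownSubgraph σ).Reachable v w}.Infinite}
      ≤ ∑ k : Fin (n + 1), ∑ c : Fin n → Bool, ν (codeEvent v k c) :=
        (measure_mono hcover).trans <| (measure_iUnion_fintype_le _ _).trans <|
          Finset.sum_le_sum fun k _ => measure_iUnion_fintype_le _ _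
    _ ≤ ∑ _k : Fin (n + 1), ∑ _c : Fin n → Bool, ENNReal.ofReal t ^ n := by
        gcongr with k _ c _
        exact hν.measure_codeEvent_le v k c
    _ = (n + 1) * 2 ^ n * ENNReal.ofReal t ^ n := by
        simp [mul_assoc]

theorem measure_reachable_infinite_eq_zero (hν : IsLeftDownMeasure t ν) (ht0 : 0 ≤ t)
    (ht : t < 1 / 2) (v : ℤ × ℤ) :
    ν {σ | {w | (leftDownSubgraph σ).Reachable v w}.Infinite} = 0 := by
  have hlim : Tendsto (fun n : ℕ => ENNReal.ofReal ((n + 1) * (2 * t) ^ n)) atTop (𝓝 0) := by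
    have h := (tendsto_self_mul_const_pow_of_lt_one (r := 2 * t) (by positivity) (by linarith)).add
      (tendsto_pow_atTop_nhds_zero_of_lt_one (r := 2 * t) (by positivity) (by linarith))
    simpa [add_mul] using ENNReal.tendsto_ofReal h
  refine le_antisymm (ge_of_tendsto' hlim fun n => ?_) zero_le
  calc _ ≤ (n + 1) * 2 ^ n * ENNReal.ofReal t ^ n := hν.measure_reachable_infinite_le v n
    _ = ENNReal.ofReal ((n + 1) * (2 * t) ^ n) := by
        rw [ENNReal.ofReal_mul (by positivity), ENNReal.ofReal_pow (by positivity),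
          ENNReal.ofReal_mul zero_le_two, mul_pow, mul_assoc]
        norm_cast

end IsLeftDownMeasure

theorem leftDown_components_finite (t : ℝ) (ht0 : 0 ≤ t) (ht : t ≤ 3 / 8)
    (ν : Measure ((ℤ × ℤ) → LDState)) (hν : IsLeftDownMeasure t ν) :
    ν {σ | ∀ v : ℤ × ℤ, {w | (leftDownSubgraph σ).Reachable v w}.Finite} = 1 := by
  have : IsProbabilityMeasure ν := hν.1
  have hnull : ν {σ | ∀ v : ℤ × ℤ, {w | (leftDownSubgraph σ).Reachable v w}.Finite}ᶜ = 0 := by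
    simpa [Set.compl_ofPred, Set.ofPred_exists] using
      measure_iUnion_null fun v => hν.measure_reachable_infinite_eq_zero ht0 (by linarith) v
  rw [measure_congr (ae_eq_univ.2 hnull), measure_univ]

end OneIndep
end

section
/- Let G be a finite connected graph with v(G) vertices, let p ∈ [0,1] and α ∈ (0, 1/2], and suppose that (f_{1,G}(p))² ≥ (1/(α(1−α)))·(1−p)^{v(G)}. Then for every ℓ ∈ ℕ, f_{1, P_ℓ × G}(p) ≥ ((1−α)·f_{1,G}(p))^ℓ. -/
/-! Call `A_k` (`prefixEvent k`) the event that each of the first `k` layers `{i} × V` of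
`P_ℓ × G` is connected by open edges and that consecutive ones among them are joined by an
open rung `(i, v) — (i + 1, v)`; then `A_ℓ` forces `P_ℓ × G` to be open-connected, and `A_0`
is sure. Each layer is a copy of `G` carrying a 1-independent measure, so the event `E` that layer
`k + 1` is connected has probability at least `f = f_{1,G}(p)`, and it is independent of
`A_{k+1}`, which only sees lower layers. On `E ∩ A_{k+1}` the event `A_{k+2}` fails only if
all `v(G)` rungs between layers `k` and `k + 1` are closed; these rungs form a matching that
is 1-distant from the edges seen by `A_k ⊇ A_{k+1}`, so this has probability at most
`(1 - p)^{v(G)} P(A_k)`. Hence `P(A_{k+2}) ≥ f P(A_{k+1}) - (1 - p)^{v(G)} P(A_k)`, and when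
`(1 - p)^{v(G)} ≤ α (1 - α) f²` this recurrence keeps `P(A_{k+1}) ≥ (1 - α) f P(A_k)`. -/

open MeasureTheory ProbabilityTheory

namespace OneIndep

variable {V : Type*}

section Independence

variable {G : SimpleGraph V}

def edgesWithin (G : SimpleGraph V) (S : Set V) : Set G.edgeSet := {e | (e : Sym2 V) ∈ S.sym2}

lemma edgesWithin_mono {S T : Set V} (hST : S ⊆ T) : edgesWithin G S ⊆ edgesWithin G T :=
  fun _ he => Set.mem_sym2_iff_subset.mpr ((Set.mem_sym2_iff_subset.mp he).trans hST)

lemma endpointsOf_subset_iff {F : Set (Sym2 V)} {S : Set V} :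
    endpointsOf F ⊆ S ↔ F ⊆ S.sym2 := by
  refine ⟨fun h e he => ?_, fun h x ⟨e, he, hx⟩ => ?_⟩ <;> induction e using Sym2.ind
  · exact ⟨h ⟨_, he, Sym2.mem_mk_left _ _⟩, h ⟨_, he, Sym2.mem_mk_right _ _⟩⟩
  · rcases Sym2.mem_iff.mp hx with rfl | rfl
    exacts [(h he).1, (h he).2]

lemma kDistant_one_of_disjoint {F₁ F₂ : Set (Sym2 V)}
    (h : Disjoint (endpointsOf F₁) (endpointsOf F₂)) : KDistant G 1 F₁ F₂ := by
  refine ⟨Set.disjoint_left.mpr fun e he₁ he₂ => ?_, fun u hu v hv w => ?_⟩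
  · exact Set.disjoint_left.mp h ⟨e, he₁, e.out_fst_mem⟩ ⟨e, he₂, e.out_fst_mem⟩
  · refine Nat.one_le_iff_ne_zero.mpr fun hw => ?_
    exact Set.disjoint_left.mp h hu (SimpleGraph.Walk.eq_of_length_eq_zero hw ▸ hv)

lemma KDistant.disjoint_endpointsOf {F₁ F₂ : Set (Sym2 V)} (h : KDistant G 1 F₁ F₂) :
    Disjoint (endpointsOf F₁) (endpointsOf F₂) :=
  Set.disjoint_left.mpr fun x hx₁ hx₂ => by simpa using h.2 x hx₁ x hx₂ .nil

lemma measurableSet_cylinderSigma [Finite V] {E : Set G.edgeSet} {s : Set (Config G)}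
    (hs : DependsOn (· ∈ s) E) : MeasurableSet[cylinderSigma G ((↑) '' E)] s := by
  refine ⟨(fun ω (e : {e : G.edgeSet // (e : Sym2 V) ∈ (↑) '' E}) => ω e) '' s,
    Set.toFinite _ |>.measurableSet, Set.ext fun ω => ⟨?_, fun hω => ⟨ω, hω, rfl⟩⟩⟩
  rintro ⟨ω', hω', hω'ω⟩
  refine (hs fun e he => ?_).mp hω'
  exact congrFun hω'ω ⟨e, Set.mem_image_of_mem _ he⟩

lemma dependsOn_of_measurableSet_cylinderSigma {F : Set (Sym2 V)} {s : Set (Config G)}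
    (hs : MeasurableSet[cylinderSigma G F] s) : DependsOn (· ∈ s) {e : G.edgeSet | ↑e ∈ F} := by
  obtain ⟨t, -, rfl⟩ := hs
  intro ω ω' h
  have hωω' : (fun e : {e : G.edgeSet // ↑e ∈ F} => ω e) =
      fun e : {e : G.edgeSet // ↑e ∈ F} => ω' e :=
    funext fun e => h e.1 e.2
  simp only [Set.mem_preimage, hωω']

lemma KIndepMeasure.measure_inter [Finite V] {μ : Measure (Config G)}
    (hμ : KIndepMeasure G 1 μ) {S T : Set V} (hST : Disjoint S T) {s t : Set (Config G)}
    (hs : DependsOn (· ∈ s) (edgesWithin G S)) (ht : DependsOn (· ∈ t) (edgesWithin G T)) :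
    μ (s ∩ t) = μ s * μ t := by
  have hend : ∀ U : Set V, endpointsOf ((↑) '' edgesWithin G U) ⊆ U := fun U =>
    endpointsOf_subset_iff.mpr <| Set.image_subset_iff.mpr fun e he => he
  have hsub : ∀ U : Set V, ((↑) '' edgesWithin G U : Set (Sym2 V)) ⊆ G.edgeSet := fun U =>
    Set.image_subset_iff.mpr fun e _ => e.2
  refine (Indep_iff _ _ μ).mp (hμ _ _ (hsub S) (hsub T) ?_) s t
    (measurableSet_cylinderSigma hs) (measurableSet_cylinderSigma ht)
  exact kDistant_one_of_disjoint (hST.mono (hend S) (hend T))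

end Independence

section Measures

variable {G : SimpleGraph V} {k : ℕ} {p : ℝ} {μ : Measure (Config G)}

lemma measure_edge_closed_le (hμ : μ ∈ MGe G k p) (hp : 0 ≤ p) (e : G.edgeSet) :
    μ {ω | ω e = false} ≤ ENNReal.ofReal (1 - p) := by
  have := hμ.1
  have hopen : MeasurableSet {ω : Config G | ω e = true} :=
    measurableSet_eq_fun (measurable_pi_apply e) measurable_const
  calc μ {ω | ω e = false} = μ {ω | ω e = true}ᶜ := by simp [Set.compl_ofPred]
    _ = 1 - μ {ω | ω e = true} := prob_compl_eq_one_sub hopen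
    _ ≤ 1 - ENNReal.ofReal p := tsub_le_tsub_left (hμ.2.2 e) 1
    _ = ENNReal.ofReal (1 - p) := by rw [ENNReal.ofReal_sub 1 hp, ENNReal.ofReal_one]

lemma measure_forall_closed_le [Finite V] (hμ : μ ∈ MGe G 1 p) (hp : 0 ≤ p) {ι : Type*}
    {e : ι → G.edgeSet} {S : ι → Set V} (heS : ∀ i, (e i : Sym2 V) ∈ (S i).sym2)
    (hS : Pairwise fun i j => Disjoint (S i) (S j)) (s : Finset ι) :
    μ {ω | ∀ i ∈ s, ω (e i) = false} ≤ ENNReal.ofReal (1 - p) ^ s.card := by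
  classical
  have := hμ.1
  induction s using Finset.induction_on with
  | empty => simp
  | insert a s ha ih =>
    have hsplit : {ω : Config G | ∀ i ∈ insert a s, ω (e i) = false} =
        {ω | ω (e a) = false} ∩ {ω | ∀ i ∈ s, ω (e i) = false} := by
      ext ω; simp
    have hdisj : Disjoint (S a) (⋃ i ∈ s, S i) :=
      Set.disjoint_iUnion₂_right.mpr fun i hi => hS (ne_of_mem_of_not_mem hi ha).symm
    have hdep₁ : DependsOn (· ∈ {ω : Config G | ω (e a) = false}) (edgesWithin G (S a)) :=
      fun ω ω' h => by simp [h (e a) (heS a)]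
    have hdep₂ : DependsOn (· ∈ {ω : Config G | ∀ i ∈ s, ω (e i) = false})
        (edgesWithin G (⋃ i ∈ s, S i)) := fun ω ω' h => by
      refine propext (forall₂_congr fun i hi => ?_)
      rw [h (e i) (edgesWithin_mono (Set.subset_biUnion_of_mem hi) (heS i))]
    rw [hsplit, hμ.2.1.measure_inter hdisj hdep₁ hdep₂, Finset.card_insert_of_notMem ha,
      pow_succ']
    exact mul_le_mul' (measure_edge_closed_le hμ hp _) ih

lemma dirac_mem_MGe [Finite V] (hp : p ≤ 1) :
    Measure.dirac (fun _ => true : Config G) ∈ MGe G k p := by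
  refine ⟨inferInstance, fun F₁ F₂ _ _ _ => (Indep_iff _ _ _).mpr fun s t _ _ => ?_, fun e => ?_⟩
  · simp only [Measure.dirac_apply]
    by_cases hs : (fun _ => true : Config G) ∈ s <;>
      by_cases ht : (fun _ => true : Config G) ∈ t <;> simp [hs, ht]
  · simpa [Measure.dirac_apply] using hp

lemma connFun_nonneg : 0 ≤ connFun G k p :=
  Real.sInf_nonneg (by rintro _ ⟨_, -, rfl⟩; exact ENNReal.toReal_nonneg)

lemma connFun_le (hμ : μ ∈ MGe G k p) :
    connFun G k p ≤ (μ {ω | (openSubgraph G ω).Connected}).toReal :=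
  csInf_le ⟨0, by rintro _ ⟨_, -, rfl⟩; exact ENNReal.toReal_nonneg⟩ ⟨μ, hμ, rfl⟩

lemma le_connFun [Finite V] (hp : p ≤ 1) {x : ℝ}
    (h : ∀ μ ∈ MGe G k p, x ≤ (μ {ω | (openSubgraph G ω).Connected}).toReal) :
    x ≤ connFun G k p :=
  le_csInf ⟨_, _, dirac_mem_MGe hp, rfl⟩ (by rintro _ ⟨μ, hμ, rfl⟩; exact h μ hμ)

end Measures

lemma openSubgraph_adj {G : SimpleGraph V} {ω : Config G} {u v : V} :
    (openSubgraph G ω).Adj u v ↔ ∃ h : G.Adj u v, ω ⟨s(u, v), h⟩ = true := by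
  simp only [openSubgraph, SimpleGraph.fromEdgeSet_adj]
  exact ⟨fun ⟨h, _⟩ => h, fun ⟨h, hω⟩ => ⟨⟨h, hω⟩, h.ne⟩⟩

section Comap

variable {W : Type*} {G : SimpleGraph V} {H : SimpleGraph W} (φ : G ↪g H)

def Config.comap (ω : Config H) : Config G := ω ∘ φ.mapEdgeSet

lemma Config.measurable_comap : Measurable (Config.comap φ) :=
  measurable_pi_iff.mpr fun _ => measurable_pi_apply _

def openSubgraphComap (ω : Config H) :
    openSubgraph G (Config.comap φ ω) →g openSubgraph H ω where
  toFun := φ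
  map_rel' h := by
    obtain ⟨hG, hω⟩ := openSubgraph_adj.mp h
    exact openSubgraph_adj.mpr ⟨φ.map_adj_iff.mpr hG, hω⟩

lemma dependsOn_comap_preimage {S : Set V} {t : Set (Config G)}
    (ht : DependsOn (· ∈ t) (edgesWithin G S)) :
    DependsOn (· ∈ Config.comap φ ⁻¹' t) (edgesWithin H (φ '' S)) := fun ω ω' h =>
  ht fun e he => h (φ.mapEdgeSet e) <| by
    show Sym2.map φ e ∈ (φ '' S).sym2
    exact Set.sym2_image ▸ Set.mem_image_of_mem _ he

variable [Finite V] [Finite W] {p : ℝ} {μ : Measure (Config H)}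

lemma map_comap_mem_MGe (hμ : μ ∈ MGe H 1 p) : μ.map (Config.comap φ) ∈ MGe G 1 p := by
  have hmap : ∀ t, μ.map (Config.comap φ) t = μ (Config.comap φ ⁻¹' t) := fun t =>
    Measure.map_apply (Config.measurable_comap φ) (Set.toFinite t).measurableSet
  have hdep : ∀ {F t}, MeasurableSet[cylinderSigma G F] t →
      DependsOn (· ∈ Config.comap φ ⁻¹' t) (edgesWithin H (φ '' endpointsOf F)) := fun ht =>
    dependsOn_comap_preimage φ <| (dependsOn_of_measurableSet_cylinderSigma ht).mono
      fun _ he => endpointsOf_subset_iff.mp le_rfl he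
  have := hμ.1
  refine ⟨Measure.isProbabilityMeasure_map (Config.measurable_comap φ).aemeasurable,
    fun F₁ F₂ _ _ hF => (Indep_iff _ _ _).mpr fun t₁ t₂ ht₁ ht₂ => ?_, fun e => ?_⟩
  · rw [hmap, hmap, hmap, Set.preimage_inter]
    exact hμ.2.1.measure_inter ((Set.disjoint_image_iff φ.injective).mpr
      hF.disjoint_endpointsOf) (hdep ht₁) (hdep ht₂)
  · rw [hmap]
    exact hμ.2.2 (φ.mapEdgeSet e)

lemma connFun_le_measure_comap (hμ : μ ∈ MGe H 1 p) :
    connFun G 1 p ≤ (μ (Config.comap φ ⁻¹' {ω | (openSubgraph G ω).Connected})).toReal := by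
  rw [← Measure.map_apply (Config.measurable_comap φ) (Set.toFinite _).measurableSet]
  exact connFun_le (map_comap_mem_MGe φ hμ)

end Comap

section Recurrence

variable {b : ℕ → ℝ} {f q α : ℝ} {n : ℕ}

lemma mul_le_succ_of_two_step (hα : 0 ≤ α) (hf : 0 ≤ f) (hb : ∀ k, 0 ≤ b k)
    (hq : q ≤ α * (1 - α) * f ^ 2) (h₁ : f * b 0 ≤ b 1)
    (hstep : ∀ k, k + 2 ≤ n → f * b (k + 1) ≤ b (k + 2) + q * b k) :
    ∀ k, k + 1 ≤ n → (1 - α) * f * b k ≤ b (k + 1)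
  | 0, _ => by nlinarith [mul_nonneg (mul_nonneg hα hf) (hb 0)]
  | k + 1, hk => by
    have ih := mul_le_succ_of_two_step hα hf hb hq h₁ hstep k (by omega)
    nlinarith [hstep k hk, mul_le_mul_of_nonneg_right hq (hb k),
      mul_le_mul_of_nonneg_left ih (mul_nonneg hα hf)]

lemma pow_mul_le_of_two_step (hα : 0 ≤ α) (hα₁ : α ≤ 1) (hf : 0 ≤ f) (hb : ∀ k, 0 ≤ b k)
    (hq : q ≤ α * (1 - α) * f ^ 2) (h₁ : f * b 0 ≤ b 1)
    (hstep : ∀ k, k + 2 ≤ n → f * b (k + 1) ≤ b (k + 2) + q * b k) :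
    ((1 - α) * f) ^ n * b 0 ≤ b n := by
  have hratio := mul_le_succ_of_two_step hα hf hb hq h₁ hstep
  suffices ∀ k ≤ n, ((1 - α) * f) ^ k * b 0 ≤ b k from this n le_rfl
  intro k hk
  induction k with
  | zero => simp
  | succ k ih =>
    calc ((1 - α) * f) ^ (k + 1) * b 0 = (1 - α) * f * (((1 - α) * f) ^ k * b 0) := by ring
      _ ≤ (1 - α) * f * b k :=
        mul_le_mul_of_nonneg_left (ih (by omega)) (mul_nonneg (by linarith) hf)
      _ ≤ b (k + 1) := hratio k hk

end Recurrence

lemma measure_mul_le_add_mul {Ω : Type*} [MeasurableSpace Ω] {μ : Measure Ω}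
    {A B D E X : Set Ω} (hB : E ∩ A ∩ X ⊆ B) (hAD : A ⊆ D)
    (hEA : μ (E ∩ A) = μ E * μ A) (hDX : μ (D ∩ Xᶜ) = μ D * μ Xᶜ) :
    μ E * μ A ≤ μ B + μ D * μ Xᶜ :=
  calc μ E * μ A = μ (E ∩ A) := hEA.symm
    _ ≤ μ (E ∩ A ∩ X) + μ ((E ∩ A) \ X) := measure_le_inter_add_sdiff _ _ _
    _ ≤ μ B + μ (D ∩ Xᶜ) :=
      add_le_add (measure_mono hB) (measure_mono fun _ ⟨⟨_, hA⟩, hX⟩ => ⟨hAD hA, hX⟩)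
    _ = μ B + μ D * μ Xᶜ := by rw [hDX]

section Ladder

open SimpleGraph

variable (G : SimpleGraph V) (ℓ : ℕ)

def layerEvent (i : Fin ℓ) : Set (Config (pathGraph ℓ □ G)) :=
  Config.comap (boxProdRight (pathGraph ℓ) G i) ⁻¹' {ω | (openSubgraph G ω).Connected}

def rung (j : ℕ) (hj : j + 1 < ℓ) (v : V) : (pathGraph ℓ □ G).edgeSet :=
  ⟨s((⟨j, by omega⟩, v), (⟨j + 1, hj⟩, v)),
    boxProd_adj.mpr (Or.inl ⟨pathGraph_adj.mpr (Or.inl rfl), rfl⟩)⟩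

def rungEvent (j : ℕ) (hj : j + 1 < ℓ) : Set (Config (pathGraph ℓ □ G)) :=
  {ω | ∃ v, ω (rung G ℓ j hj v) = true}

def prefixEvent (k : ℕ) : Set (Config (pathGraph ℓ □ G)) :=
  {ω | (∀ i : Fin ℓ, (i : ℕ) < k → ω ∈ layerEvent G ℓ i) ∧
    ∀ j (hj : j + 1 < ℓ), j + 1 < k → ω ∈ rungEvent G ℓ j hj}

lemma prefixEvent_zero : prefixEvent G ℓ 0 = Set.univ := by
  ext; simp [prefixEvent]

lemma layerEvent_subset_prefixEvent_one (hℓ : 0 < ℓ) :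
    layerEvent G ℓ ⟨0, hℓ⟩ ⊆ prefixEvent G ℓ 1 := fun ω hω =>
  ⟨fun i hi => by rwa [show i = ⟨0, hℓ⟩ from Fin.ext (Nat.lt_one_iff.mp hi)], fun _ _ _ => by omega⟩

lemma inter_rungEvent_subset_prefixEvent {k : ℕ} (hk : k + 1 < ℓ) :
    layerEvent G ℓ ⟨k + 1, hk⟩ ∩ prefixEvent G ℓ (k + 1) ∩ rungEvent G ℓ k hk ⊆
      prefixEvent G ℓ (k + 2) := by
  rintro ω ⟨⟨hE, hL, hR⟩, hX⟩
  refine ⟨fun i hi => ?_, fun j hj hjk => ?_⟩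
  · obtain hi | hi := Nat.lt_succ_iff_lt_or_eq.mp hi
    exacts [hL i hi, by rwa [show i = ⟨k + 1, hk⟩ from Fin.ext hi]]
  · obtain hjk | hjk := Nat.lt_succ_iff_lt_or_eq.mp hjk
    · exact hR j hj hjk
    · obtain rfl : j = k := by omega
      exact hX

lemma prefixEvent_succ_subset (k : ℕ) : prefixEvent G ℓ (k + 1) ⊆ prefixEvent G ℓ k :=
  fun _ ⟨hL, hR⟩ => ⟨fun i hi => hL i (by omega), fun j hj hjk => hR j hj (by omega)⟩

lemma prefixEvent_subset_connected (hℓ : 0 < ℓ) :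
    prefixEvent G ℓ ℓ ⊆ {ω | (openSubgraph (pathGraph ℓ □ G) ω).Connected} := by
  rintro ω ⟨hL, hR⟩
  have hlayer : ∀ (i : Fin ℓ) (u v : V), (openSubgraph _ ω).Reachable (i, u) (i, v) :=
    fun i u v => ((hL i i.2).preconnected u v).map (openSubgraphComap _ ω)
  obtain ⟨u₀⟩ := (hL ⟨0, hℓ⟩ hℓ).nonempty
  have hfrom : ∀ (m : ℕ) (hm : m < ℓ) (u : V),
      (openSubgraph _ ω).Reachable (⟨0, hℓ⟩, u₀) (⟨m, hm⟩, u) := by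
    intro m
    induction m with
    | zero => exact fun _ => hlayer _ u₀
    | succ m ih =>
      intro hm u
      obtain ⟨v, hv⟩ := hR m hm (by omega)
      exact ((ih (by omega) v).trans (openSubgraph_adj.mpr ⟨_, hv⟩).reachable).trans
        (hlayer _ v u)
  exact (connected_iff _).mpr
    ⟨fun x y => (hfrom x.1 x.1.2 x.2).symm.trans (hfrom y.1 y.1.2 y.2), ⟨(⟨0, hℓ⟩, u₀)⟩⟩

lemma dependsOn_layerEvent (i : Fin ℓ) :
    DependsOn (· ∈ layerEvent G ℓ i) (edgesWithin _ {x | x.1 = i}) := by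
  refine (dependsOn_comap_preimage (S := Set.univ) _
    ((dependsOn_univ _).mono fun e _ => ?_)).mono
    (edgesWithin_mono ?_)
  · simp [edgesWithin]
  · rintro _ ⟨v, -, rfl⟩
    rfl

lemma dependsOn_rungEvent (j : ℕ) (hj : j + 1 < ℓ) :
    DependsOn (· ∈ rungEvent G ℓ j hj) (edgesWithin _ {x | j ≤ (x.1 : ℕ) ∧ (x.1 : ℕ) ≤ j + 1}) :=
  fun ω ω' h => by
    have hrung : ∀ v, ω (rung G ℓ j hj v) = ω' (rung G ℓ j hj v) := fun v =>
      h _ (Set.mk_mem_sym2_iff.mpr ⟨⟨le_rfl, Nat.le_succ j⟩, ⟨Nat.le_succ j, le_rfl⟩⟩)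
    simp only [rungEvent, Set.mem_ofPred_eq, hrung]

lemma dependsOn_prefixEvent (k : ℕ) :
    DependsOn (· ∈ prefixEvent G ℓ k) (edgesWithin _ {x | (x.1 : ℕ) < k}) := fun ω ω' h => by
  have hL : ∀ i : Fin ℓ, (i : ℕ) < k → (ω ∈ layerEvent G ℓ i) = (ω' ∈ layerEvent G ℓ i) :=
    fun i hi => dependsOn_layerEvent G ℓ i fun e he =>
      h e (edgesWithin_mono (by rintro x rfl; exact hi) he)
  have hR : ∀ j (hj : j + 1 < ℓ), j + 1 < k →
      (ω ∈ rungEvent G ℓ j hj) = (ω' ∈ rungEvent G ℓ j hj) :=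
    fun j hj hjk => dependsOn_rungEvent G ℓ j hj fun e he =>
      h e (edgesWithin_mono (fun x (hx : _ ∧ _) => show (x.1 : ℕ) < k by omega) he)
  exact propext (and_congr (forall₂_congr fun i hi => (hL i hi).to_iff)
    (forall₃_congr fun j hj hjk => (hR j hj hjk).to_iff))

end Ladder

section LadderMeasure

open SimpleGraph

variable {G : SimpleGraph V} {ℓ : ℕ} {p : ℝ} {μ : Measure (Config (pathGraph ℓ □ G))}

lemma measure_layerEvent_inter_prefixEvent [Finite V] (hμ : KIndepMeasure _ 1 μ) {k : ℕ}
    (hk : k + 1 < ℓ) :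
    μ (layerEvent G ℓ ⟨k + 1, hk⟩ ∩ prefixEvent G ℓ (k + 1)) =
      μ (layerEvent G ℓ ⟨k + 1, hk⟩) * μ (prefixEvent G ℓ (k + 1)) :=
  hμ.measure_inter (Set.disjoint_left.mpr fun x (h₁ : x.1 = _) (h₂ : (x.1 : ℕ) < k + 1) => by
      rw [h₁] at h₂; exact lt_irrefl _ h₂)
    (dependsOn_layerEvent G ℓ _) (dependsOn_prefixEvent G ℓ _)

lemma measure_prefixEvent_inter_rungEvent_compl [Finite V] (hμ : KIndepMeasure _ 1 μ) {k : ℕ}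
    (hk : k + 1 < ℓ) :
    μ (prefixEvent G ℓ k ∩ (rungEvent G ℓ k hk)ᶜ) =
      μ (prefixEvent G ℓ k) * μ (rungEvent G ℓ k hk)ᶜ :=
  hμ.measure_inter (Set.disjoint_left.mpr fun x (h₁ : (x.1 : ℕ) < k) (h₂ : k ≤ _ ∧ _) => by omega)
    (dependsOn_prefixEvent G ℓ k) fun _ _ h => congrArg Not (dependsOn_rungEvent G ℓ k hk h)

lemma measure_rungEvent_compl_le [Fintype V] (hμ : μ ∈ MGe _ 1 p) (hp : 0 ≤ p) {j : ℕ}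
    (hj : j + 1 < ℓ) : μ (rungEvent G ℓ j hj)ᶜ ≤ ENNReal.ofReal (1 - p) ^ Fintype.card V := by
  have hcompl : (rungEvent G ℓ j hj)ᶜ =
      {ω | ∀ v ∈ Finset.univ, ω (rung G ℓ j hj v) = false} := by
    ext; simp [rungEvent]
  rw [hcompl, ← Finset.card_univ]
  exact measure_forall_closed_le hμ hp (e := rung G ℓ j hj) (S := fun v => {x | x.2 = v})
    (fun _ => Set.mk_mem_sym2_iff.mpr ⟨rfl, rfl⟩)
    (fun _ _ hvw => Set.disjoint_left.mpr fun _ h₁ h₂ => hvw (h₁.symm.trans h₂)) _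

lemma connFun_le_measure_prefixEvent_one [Finite V] (hμ : μ ∈ MGe _ 1 p) (hℓ : 0 < ℓ) :
    connFun G 1 p ≤ (μ (prefixEvent G ℓ 1)).toReal := by
  have := hμ.1
  exact (connFun_le_measure_comap _ hμ).trans <| ENNReal.toReal_mono (measure_ne_top _ _)
    (measure_mono (layerEvent_subset_prefixEvent_one G ℓ hℓ))

lemma connFun_mul_measure_prefixEvent_le [Fintype V] (hμ : μ ∈ MGe _ 1 p) (hp : p ∈ Set.Icc 0 1)
    {k : ℕ} (hk : k + 2 ≤ ℓ) :
    connFun G 1 p * (μ (prefixEvent G ℓ (k + 1))).toReal ≤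
      (μ (prefixEvent G ℓ (k + 2))).toReal +
        (1 - p) ^ Fintype.card V * (μ (prefixEvent G ℓ k)).toReal := by
  have := hμ.1
  have hk' : k + 1 < ℓ := by omega
  have hineq := ENNReal.toReal_mono (by finiteness) <| measure_mul_le_add_mul
    (inter_rungEvent_subset_prefixEvent G ℓ hk') (prefixEvent_succ_subset G ℓ k)
    (measure_layerEvent_inter_prefixEvent hμ.2.1 hk')
    (measure_prefixEvent_inter_rungEvent_compl hμ.2.1 hk')
  rw [ENNReal.toReal_add (by finiteness) (by finiteness), ENNReal.toReal_mul,
    ENNReal.toReal_mul] at hineq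
  have hlayer : connFun G 1 p ≤ (μ (layerEvent G ℓ ⟨k + 1, hk'⟩)).toReal :=
    connFun_le_measure_comap _ hμ
  have hrung : (μ (rungEvent G ℓ k hk')ᶜ).toReal ≤ (1 - p) ^ Fintype.card V := by
    refine ENNReal.toReal_le_of_le_ofReal (pow_nonneg (by linarith [hp.2]) _) ?_
    rw [ENNReal.ofReal_pow (by linarith [hp.2])]
    exact measure_rungEvent_compl_le hμ hp.1 hk'
  calc connFun G 1 p * (μ (prefixEvent G ℓ (k + 1))).toReal
      ≤ (μ (layerEvent G ℓ ⟨k + 1, hk'⟩)).toReal * (μ (prefixEvent G ℓ (k + 1))).toReal := by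
        gcongr
    _ ≤ _ := hineq
    _ ≤ _ := by rw [mul_comm ((1 - p) ^ _)]; gcongr

end LadderMeasure

theorem connFun_boxProd_pathGraph_ge_general {V : Type*} [Fintype V] (G : SimpleGraph V)
    (p : ℝ) (hp : p ∈ Set.Icc (0:ℝ) 1)
    (α : ℝ) (hα : α ∈ Set.Ioc (0:ℝ) (1 / 2))
    (h : (1 / (α * (1 - α))) * (1 - p) ^ (Fintype.card V) ≤ connFun G 1 p ^ 2) :
    ∀ ℓ : ℕ, 1 ≤ ℓ →
      ((1 - α) * connFun G 1 p) ^ ℓ ≤ connFun ((SimpleGraph.pathGraph ℓ).boxProd G) 1 p := by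
  intro ℓ hℓ
  obtain ⟨hα₀, hα₁⟩ := hα
  have hq : (1 - p) ^ Fintype.card V ≤ α * (1 - α) * connFun G 1 p ^ 2 := by
    rwa [one_div, inv_mul_le_iff₀ (mul_pos hα₀ (by linarith))] at h
  refine le_connFun hp.2 fun μ hμ => ?_
  have := hμ.1
  calc ((1 - α) * connFun G 1 p) ^ ℓ
      = ((1 - α) * connFun G 1 p) ^ ℓ * (μ (prefixEvent G ℓ 0)).toReal := by
        simp [prefixEvent_zero]
    _ ≤ (μ (prefixEvent G ℓ ℓ)).toReal :=
      pow_mul_le_of_two_step (b := fun k => (μ (prefixEvent G ℓ k)).toReal) hα₀.le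
        (by linarith) connFun_nonneg (fun _ => ENNReal.toReal_nonneg) hq
        (by simpa [prefixEvent_zero] using connFun_le_measure_prefixEvent_one hμ hℓ)
        fun k hk => connFun_mul_measure_prefixEvent_le hμ hp hk
    _ ≤ _ := ENNReal.toReal_mono (measure_ne_top _ _)
      (measure_mono (prefixEvent_subset_connected G ℓ hℓ))

theorem connFun_boxProd_pathGraph_ge {V : Type*} [Fintype V] (G : SimpleGraph V)
    (hconn : G.Connected) (p : ℝ) (hp : p ∈ Set.Icc (0:ℝ) 1)
    (α : ℝ) (hα : α ∈ Set.Ioc (0:ℝ) (1 / 2))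
    (h : (1 / (α * (1 - α))) * (1 - p) ^ (Fintype.card V) ≤ connFun G 1 p ^ 2) :
    ∀ ℓ : ℕ, 1 ≤ ℓ →
      ((1 - α) * connFun G 1 p) ^ ℓ ≤ connFun ((SimpleGraph.pathGraph ℓ).boxProd G) 1 p :=
  connFun_boxProd_pathGraph_ge_general G p hp α hα h

end OneIndep
end

section
/- For all integers n ≥ 2 and all p ∈ [0,1], the maximal 1-independent connectivity function of the path P_n satisfies F_{1,P_n}(p) = p^{⌊n/2⌋}. -/
/-!
A spanning subgraph of a tree is connected only if it is the whole tree, so for the path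
`F_{1,P_n}(p)` is the largest probability that all edges are open.

Upper bound: the `⌊n/2⌋` edges `{2k, 2k+1}` form a matching, so any two disjoint subfamilies
are 1-distant and 1-independence makes the probability that all of them are open a product
of `⌊n/2⌋` factors, each at most `p`.

Lower bound: group the edges into `⌊n/2⌋` blocks of at most two adjacent edges, toss an
independent `p`-coin for each block and open the edges of a block together. Edges of one block
share a vertex, so 1-distant edge sets read disjoint sets of coins and the measure is
1-independent; all edges are open exactly when all coins succeed, with probability `p^⌊n/2⌋`.
-/

open MeasureTheory ProbabilityTheory

namespace OneIndep

variable {V : Type*}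

open SimpleGraph

variable {G : SimpleGraph V}

lemma openSubgraph_le (ω : Config G) : openSubgraph G ω ≤ G := fun _ _ h =>
  ((fromEdgeSet_adj _).mp h).1.1

lemma openSubgraph_eq_self_iff (ω : Config G) : openSubgraph G ω = G ↔ ∀ e, ω e = true := by
  constructor
  · rintro h ⟨e, he⟩
    have he' : e ∈ (openSubgraph G ω).edgeSet := by rwa [h]
    rw [openSubgraph, edgeSet_fromEdgeSet] at he'
    exact he'.1.2
  · intro h
    have hopen : {e | ∃ he : e ∈ G.edgeSet, ω ⟨e, he⟩ = true} = G.edgeSet :=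
      Set.ext fun e => ⟨fun ⟨he, _⟩ => he, fun he => ⟨he, h _⟩⟩
    rw [openSubgraph, hopen, fromEdgeSet_edgeSet]

lemma openSubgraph_connected_iff_of_isTree (hG : G.IsTree) (ω : Config G) :
    (openSubgraph G ω).Connected ↔ ∀ e, ω e = true := by
  rw [← openSubgraph_eq_self_iff]
  exact ⟨fun h => (isTree_iff_minimal_connected.mp hG).eq_of_le h (openSubgraph_le ω),
    fun h => by rw [h]; exact hG.connected⟩

lemma kDistant_one_iff_disjoint_endpointsOf {F₁ F₂ : Set (Sym2 V)} :
    KDistant G 1 F₁ F₂ ↔ Disjoint (endpointsOf F₁) (endpointsOf F₂) := by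
  constructor
  · intro h
    refine Set.disjoint_left.mpr fun v hv₁ hv₂ => ?_
    simpa using h.2 v hv₁ v hv₂ Walk.nil
  · intro h
    refine ⟨Set.disjoint_left.mpr fun e he₁ he₂ => ?_, fun u hu v hv w => ?_⟩
    · induction e using Sym2.ind with
      | _ a b =>
        exact Set.disjoint_left.mp h ⟨_, he₁, Sym2.mem_mk_left a b⟩ ⟨_, he₂, Sym2.mem_mk_left a b⟩
    · refine Nat.one_le_iff_ne_zero.mpr fun hw => ?_
      exact Set.disjoint_left.mp h hu (Walk.eq_of_length_eq_zero hw ▸ hv)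

lemma measurableSet_cylinderSigma_open {F : Set (Sym2 V)} {e : G.edgeSet}
    (he : (e : Sym2 V) ∈ F) :
    MeasurableSet[cylinderSigma G F] {ω | ω e = true} :=
  ⟨_, measurable_pi_apply ⟨e, he⟩ (measurableSet_singleton true), rfl⟩

lemma measurableSet_open (e : G.edgeSet) : MeasurableSet {ω : Config G | ω e = true} :=
  measurableSet_eq_fun (measurable_pi_apply e) measurable_const

lemma cylinderSigma_le (F : Set (Sym2 V)) : cylinderSigma G F ≤ MeasurableSpace.pi :=
  (measurable_pi_lambda _ fun _ => measurable_pi_apply _).comap_le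

section Matching

variable {μ : Measure (Config G)} {ι : Type*}

theorem measure_forall_open_eq_prod_of_matching [IsProbabilityMeasure μ] (hμ : KIndepMeasure G 1 μ)
    (f : ι → G.edgeSet) (s : Finset ι)
    (hf : (s : Set ι).Pairwise fun i j => ∀ v ∈ (f i : Sym2 V), v ∉ (f j : Sym2 V)) :
    μ {ω | ∀ i ∈ s, ω (f i) = true} = ∏ i ∈ s, μ {ω | ω (f i) = true} := by
  classical
  induction s using Finset.induction_on with
  | empty => simp
  | @insert a s ha ih =>
    have hf' : (s : Set ι).Pairwise fun i j => ∀ v ∈ (f i : Sym2 V), v ∉ (f j : Sym2 V) :=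
      hf.mono (by simp)
    have hdist : KDistant G 1 {(f a : Sym2 V)} ((fun i => (f i : Sym2 V)) '' s) := by
      refine kDistant_one_iff_disjoint_endpointsOf.mpr (Set.disjoint_left.mpr ?_)
      rintro v ⟨_, rfl, hva⟩ ⟨_, ⟨i, hi, rfl⟩, hvi⟩
      exact hf (by simp) (by simp [hi]) (by rintro rfl; exact ha hi) v hva hvi
    have hindep := (Indep_iff _ _ μ).mp
      (hμ _ _ (by simp) (by rintro _ ⟨i, -, rfl⟩; exact (f i).2) hdist)
    have hset : {ω : Config G | ∀ i ∈ insert a s, ω (f i) = true}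
        = {ω | ω (f a) = true} ∩ ⋂ i ∈ s, {ω | ω (f i) = true} := by
      ext; simp
    have hset' : {ω : Config G | ∀ i ∈ s, ω (f i) = true} = ⋂ i ∈ s, {ω | ω (f i) = true} := by
      ext; simp
    rw [hset, hindep _ _ (measurableSet_cylinderSigma_open rfl)
      (s.measurableSet_biInter fun i hi => measurableSet_cylinderSigma_open ⟨i, hi, rfl⟩),
      Finset.prod_insert ha, ← hset', ih hf']

theorem measure_forall_open_le_pow_card [Fintype ι] {p : ℝ} (hμ : μ ∈ MLe G 1 p)
    (f : ι → G.edgeSet) (hf : Pairwise fun i j => ∀ v ∈ (f i : Sym2 V), v ∉ (f j : Sym2 V)) :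
    μ {ω | ∀ e, ω e = true} ≤ ENNReal.ofReal p ^ Fintype.card ι :=
  have := hμ.1
  calc μ {ω | ∀ e, ω e = true} ≤ μ {ω | ∀ i ∈ Finset.univ, ω (f i) = true} :=
        measure_mono fun _ h i _ => h (f i)
    _ = ∏ i, μ {ω | ω (f i) = true} :=
        measure_forall_open_eq_prod_of_matching hμ.2.1 f _ fun _ _ _ _ hij => hf hij
    _ ≤ ∏ _i : ι, ENNReal.ofReal p := Finset.prod_le_prod' fun i _ => hμ.2.2 (f i)
    _ = ENNReal.ofReal p ^ Fintype.card ι := Finset.prod_const _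

end Matching

lemma indep_map_of_indep_comap {Ω Ω' : Type*} {mΩ : MeasurableSpace Ω}
    {m₁ m₂ mΩ' : MeasurableSpace Ω'} {ν : Measure Ω} {φ : Ω → Ω'} (hφ : Measurable φ)
    (h₁ : m₁ ≤ mΩ') (h₂ : m₂ ≤ mΩ') (h : Indep (m₁.comap φ) (m₂.comap φ) ν) :
    Indep m₁ m₂ (ν.map φ) := by
  rw [Indep_iff] at h ⊢
  intro t₁ t₂ ht₁ ht₂
  rw [Measure.map_apply hφ ((h₁ _ ht₁).inter (h₂ _ ht₂)), Measure.map_apply hφ (h₁ _ ht₁),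
    Measure.map_apply hφ (h₂ _ ht₂), Set.preimage_inter]
  exact h _ _ ⟨t₁, ht₁, rfl⟩ ⟨t₂, ht₂, rfl⟩

section BlockMeasure

variable {ι : Type*} (block : G.edgeSet → ι)

def blockConfig (Y : ι → Bool) : Config G := fun e => Y (block e)

lemma measurable_blockConfig : Measurable (blockConfig block) :=
  measurable_pi_lambda _ fun e => measurable_pi_apply (block e)

lemma comap_blockConfig_cylinderSigma_le (F : Set (Sym2 V)) :
    (cylinderSigma G F).comap (blockConfig block)
      ≤ ⨆ k ∈ block '' {e | (e : Sym2 V) ∈ F},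
          MeasurableSpace.comap (Function.eval k) inferInstance := by
  rw [cylinderSigma, MeasurableSpace.comap_comp, MeasurableSpace.pi, MeasurableSpace.comap_iSup]
  refine iSup_le fun e => ?_
  rw [MeasurableSpace.comap_comp]
  exact le_iSup₂_of_le (block e) ⟨e.1, e.2, rfl⟩ le_rfl

variable [Fintype ι] (β : Measure Bool) [IsProbabilityMeasure β]

noncomputable def blockMeasure : Measure (Config G) :=
  (Measure.pi fun _ : ι => β).map (blockConfig block)

instance : IsProbabilityMeasure (blockMeasure block β) :=
  Measure.isProbabilityMeasure_map (measurable_blockConfig block).aemeasurable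

lemma blockMeasure_open (e : G.edgeSet) : blockMeasure block β {ω | ω e = true} = β {true} := by
  rw [blockMeasure, Measure.map_apply (measurable_blockConfig block) (measurableSet_open e)]
  exact (measurePreserving_eval (fun _ : ι => β) (block e)).measure_preimage
    (measurableSet_singleton true).nullMeasurableSet

lemma blockMeasure_forall_open [Countable G.edgeSet] (hblock : Function.Surjective block) :
    blockMeasure block β {ω | ∀ e, ω e = true} = β {true} ^ Fintype.card ι := by
  have hmeas : MeasurableSet {ω : Config G | ∀ e, ω e = true} := by
    simp only [Set.ofPred_forall]
    exact MeasurableSet.iInter measurableSet_open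
  have hpre : blockConfig block ⁻¹' {ω : Config G | ∀ e, ω e = true}
      = Set.univ.pi fun _ => {true} := by
    ext Y
    simp only [Set.mem_preimage, Set.mem_ofPred_eq, blockConfig, Set.mem_pi, Set.mem_univ,
      Set.mem_singleton_iff, true_implies]
    exact ⟨fun h k => (hblock k).elim fun e he => he ▸ h e, fun h e => h (block e)⟩
  rw [blockMeasure, Measure.map_apply (measurable_blockConfig block) hmeas, hpre, Measure.pi_pi,
    Finset.prod_const, Finset.card_univ]

theorem kIndepMeasure_blockMeasure
    (hblock : ∀ e₁ e₂, block e₁ = block e₂ → ∃ v, v ∈ (e₁ : Sym2 V) ∧ v ∈ (e₂ : Sym2 V)) :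
    KIndepMeasure G 1 (blockMeasure block β) := by
  intro F₁ F₂ _ _ hdist
  have hdisj :
      Disjoint (block '' {e | (e : Sym2 V) ∈ F₁}) (block '' {e | (e : Sym2 V) ∈ F₂}) := by
    refine Set.disjoint_left.mpr ?_
    rintro _ ⟨e₁, he₁, rfl⟩ ⟨e₂, he₂, hblock₂⟩
    obtain ⟨v, hv₂, hv₁⟩ := hblock e₂ e₁ hblock₂
    exact Set.disjoint_left.mp (kDistant_one_iff_disjoint_endpointsOf.mp hdist)
      ⟨_, he₁, hv₁⟩ ⟨_, he₂, hv₂⟩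
  have hcoords : iIndep (fun k => MeasurableSpace.comap (Function.eval k) inferInstance)
      (Measure.pi fun _ : ι => β) :=
    (iIndepFun_iff_iIndep _ _ _).mp (iIndepFun_pi (X := fun _ => id) fun _ => aemeasurable_id)
  have hblocks := indep_iSup_of_disjoint (fun k => (measurable_pi_apply k).comap_le) hcoords hdisj
  exact indep_map_of_indep_comap (measurable_blockConfig block) (cylinderSigma_le F₁)
    (cylinderSigma_le F₂) <| indep_of_indep_of_le_right
      (indep_of_indep_of_le_left hblocks (comap_blockConfig_cylinderSigma_le block F₁))
      (comap_blockConfig_cylinderSigma_le block F₂)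

end BlockMeasure

section PathGraph

variable {n : ℕ}

lemma pathGraph_isBridge_of_succ {u v : Fin n} (huv : u.val + 1 = v.val) :
    (pathGraph n).IsBridge s(u, v) := by
  rw [isBridge_iff]
  rintro ⟨p⟩
  obtain ⟨d, -, hd₁, hd₂⟩ := p.exists_boundary_dart {x | x.val ≤ u.val} (by simp)
    (by simp only [Set.mem_ofPred_eq]; omega)
  have hadj := d.adj
  rw [deleteEdges_adj, pathGraph_adj] at hadj
  simp only [Set.mem_ofPred_eq] at hd₁ hd₂
  have hfst : d.fst = u := Fin.ext (by omega)
  have hsnd : d.snd = v := Fin.ext (by omega)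
  exact hadj.2 (by rw [hfst, hsnd]; rfl)

lemma pathGraph_isAcyclic (n : ℕ) : (pathGraph n).IsAcyclic := by
  refine isAcyclic_iff_forall_adj_isBridge.mpr fun u v huv => ?_
  rcases pathGraph_adj.mp huv with h | h
  · exact pathGraph_isBridge_of_succ h
  · rw [Sym2.eq_swap]
    exact pathGraph_isBridge_of_succ h

lemma pathGraph_isTree (n : ℕ) : (pathGraph (n + 1)).IsTree :=
  ⟨pathGraph_connected n, pathGraph_isAcyclic _⟩

lemma exists_eq_of_mem_edgeSet_pathGraph {e : Sym2 (Fin n)} (he : e ∈ (pathGraph n).edgeSet) :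
    ∃ (i : Fin n) (h : i.val + 1 < n), e = s(i, ⟨i.val + 1, h⟩) := by
  induction e using Sym2.ind with
  | _ u v =>
    rcases pathGraph_adj.mp he with h | h
    · exact ⟨u, h ▸ v.2, by congr; exact Fin.ext h.symm⟩
    · exact ⟨v, h ▸ u.2, by rw [Sym2.eq_swap]; congr; exact Fin.ext h.symm⟩

lemma sym2_inf_mk_succ (i : Fin n) (h : i.val + 1 < n) : s(i, ⟨i.val + 1, h⟩).inf = i :=
  inf_of_le_left (Fin.le_def.mpr (Nat.le_succ _))

-- Block `k` consists of the edges `{2k, 2k+1}` and `{2k+1, 2k+2}`, which share the vertex `2k+1`.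
def pathBlock (e : (pathGraph n).edgeSet) : Fin (n / 2) :=
  ⟨(e : Sym2 (Fin n)).inf.val / 2, by
    obtain ⟨i, hi, he⟩ := exists_eq_of_mem_edgeSet_pathGraph e.2
    rw [he, sym2_inf_mk_succ]
    omega⟩

lemma exists_mem_of_pathBlock_eq {e₁ e₂ : (pathGraph n).edgeSet}
    (h : pathBlock e₁ = pathBlock e₂) :
    ∃ v, v ∈ (e₁ : Sym2 (Fin n)) ∧ v ∈ (e₂ : Sym2 (Fin n)) := by
  obtain ⟨i, hi, he₁⟩ := exists_eq_of_mem_edgeSet_pathGraph e₁.2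
  obtain ⟨j, hj, he₂⟩ := exists_eq_of_mem_edgeSet_pathGraph e₂.2
  have hij : i.val / 2 = j.val / 2 := by
    simpa [pathBlock, he₁, he₂, sym2_inf_mk_succ] using h
  refine ⟨max i j, ?_, ?_⟩ <;>
    simp only [he₁, he₂, Sym2.mem_iff, Fin.ext_iff, Fin.coe_max] <;> omega

def pairEdge (k : Fin (n / 2)) : (pathGraph n).edgeSet :=
  ⟨s(⟨2 * k.val, by omega⟩, ⟨2 * k.val + 1, by omega⟩), pathGraph_adj.mpr (Or.inl rfl)⟩

lemma pathBlock_pairEdge (k : Fin (n / 2)) : pathBlock (pairEdge k) = k :=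
  Fin.ext <| by simp [pathBlock, pairEdge]

lemma pairEdge_pairwise_disjoint :
    Pairwise fun k l : Fin (n / 2) =>
      ∀ v ∈ (pairEdge k : Sym2 (Fin n)), v ∉ (pairEdge l : Sym2 (Fin n)) := by
  intro k l hkl v hvk hvl
  simp only [pairEdge, Sym2.mem_iff, Fin.ext_iff] at hvk hvl
  exact hkl (Fin.ext (by omega))

end PathGraph

theorem connFunMax_pathGraph (n : ℕ) (hn : 2 ≤ n) (p : ℝ) (hp : p ∈ Set.Icc (0:ℝ) 1) :
    connFunMax (SimpleGraph.pathGraph n) 1 p = p ^ (n / 2) := by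
  obtain ⟨m, rfl⟩ : ∃ m, n = m + 1 := ⟨n - 1, by omega⟩
  let β := bernoulliMeasure true false ⟨p, hp⟩
  have hβ : β {true} = ENNReal.ofReal p := by
    rw [bernoulliMeasure_apply_of_mem_of_notMem _ (measurableSet_singleton _) rfl (by simp),
      ENNReal.ofReal, Real.toNNReal_of_nonneg hp.1]
    rfl
  have hblock : blockMeasure pathBlock β ∈ MLe (pathGraph (m + 1)) 1 p :=
    ⟨inferInstance, kIndepMeasure_blockMeasure _ _ fun _ _ => exists_mem_of_pathBlock_eq,
      fun e => (blockMeasure_open _ _ e).trans_le hβ.le⟩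
  simp_rw [connFunMax, openSubgraph_connected_iff_of_isTree (pathGraph_isTree m)]
  refine IsGreatest.csSup_eq ⟨⟨_, hblock, ?_⟩, ?_⟩
  · rw [blockMeasure_forall_open _ _ fun k => ⟨pairEdge k, pathBlock_pairEdge k⟩, hβ,
      ENNReal.toReal_pow, ENNReal.toReal_ofReal hp.1, Fintype.card_fin]
  · rintro _ ⟨μ, hμ, rfl⟩
    have hle := measure_forall_open_le_pow_card hμ pairEdge pairEdge_pairwise_disjoint
    rw [Fintype.card_fin] at hle
    calc (μ _).toReal ≤ (ENNReal.ofReal p ^ ((m + 1) / 2)).toReal :=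
          ENNReal.toReal_mono (by finiteness) hle
      _ = p ^ ((m + 1) / 2) := by rw [ENNReal.toReal_pow, ENNReal.toReal_ofReal hp.1]

end OneIndep
end

section
/- For all integers k ≥ 2 and n ≥ 2, and all p ∈ [0,1], the k-independent connectivity function of the complete graph satisfies f_{k,K_n}(p) = 0 if p ≤ 1 − 2/n, and f_{k,K_n}(p) = 1 − n(1−p)/2 otherwise. -/
open MeasureTheory ProbabilityTheory

namespace OneIndep

variable {V : Type*}

open scoped ENNReal

/-!
If the open subgraph of `K_n` is disconnected, its complement (the closed edges) is connected,
so at least `n - 1` of the `n(n-1)/2` edges are closed. Markov's inequality for the number of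
closed edges gives `(n - 1) P(disconnected) ≤ n(n-1)/2 · (1 - p)`, i.e.
`P(connected) ≥ 1 - n(1-p)/2`. The bound is attained by the measure that opens all edges with
probability `1 - q` and otherwise isolates a uniformly random vertex, with
`q = min 1 (n(1-p)/2)`: an isolated vertex closes exactly `n - 1` edges, each edge is open with
probability `1 - 2q/n ≥ p`, and the graph is connected with probability `1 - q`. In `K_n` any two
nonempty edge sets are at distance at most `1`, so for `k ≥ 2` every measure is `k`-independent.
-/

lemma KDistant.eq_empty_or_eq_empty_of_top {k : ℕ} (hk : 2 ≤ k) {F₁ F₂ : Set (Sym2 V)}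
    (h : KDistant ⊤ k F₁ F₂) : F₁ = ∅ ∨ F₂ = ∅ := by
  by_contra! hne
  obtain ⟨⟨e₁, he₁⟩, ⟨e₂, he₂⟩⟩ := hne
  obtain ⟨u, hu⟩ : (endpointsOf F₁).Nonempty := ⟨e₁.out.1, e₁, he₁, Sym2.out_fst_mem e₁⟩
  obtain ⟨v, hv⟩ : (endpointsOf F₂).Nonempty := ⟨e₂.out.1, e₂, he₂, Sym2.out_fst_mem e₂⟩
  rcases eq_or_ne u v with rfl | huv
  · have := h.2 u hu u hv .nil
    simp at this
    omega
  · have := h.2 u hu v hv ((SimpleGraph.top_adj u v).2 huv).toWalk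
    simp at this
    omega

lemma cylinderSigma_empty (G : SimpleGraph V) : cylinderSigma G ∅ = ⊥ := by
  have hconst : (fun (ω : Config G) (e : {e : G.edgeSet // (e : Sym2 V) ∈ (∅ : Set (Sym2 V))}) =>
      ω e) = fun _ e => absurd e.2 (Set.notMem_empty _) :=
    funext fun _ => funext fun e => absurd e.2 (Set.notMem_empty _)
  rw [cylinderSigma, hconst, MeasurableSpace.comap_const]

lemma kIndepMeasure_top {k : ℕ} (hk : 2 ≤ k) (μ : Measure (Config (⊤ : SimpleGraph V)))
    [IsZeroOrProbabilityMeasure μ] : KIndepMeasure ⊤ k μ := by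
  intro F₁ F₂ _ _ h
  rcases h.eq_empty_or_eq_empty_of_top hk with rfl | rfl
  · rw [cylinderSigma_empty]
    exact indep_bot_left _
  · rw [cylinderSigma_empty]
    exact indep_bot_right _

lemma natCard_sub_one_le_natCard_compl_edgeSet [Finite V] [Nonempty V] {H : SimpleGraph V}
    (h : ¬ H.Connected) : Nat.card V - 1 ≤ Nat.card Hᶜ.edgeSet := by
  have := (H.connected_or_connected_compl.resolve_left h).card_vert_le_card_edgeSet_add_one
  omega

lemma mem_edgeSet_sdiff_openSubgraph {G : SimpleGraph V} {ω : Config G} {e : Sym2 V} :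
    e ∈ (G \ openSubgraph G ω).edgeSet ↔ ∃ h : e ∈ G.edgeSet, ω ⟨e, h⟩ = false := by
  simp only [SimpleGraph.edgeSet_sdiff, openSubgraph, SimpleGraph.edgeSet_fromEdgeSet,
    Set.mem_sdiff, Set.mem_ofPred_eq, Sym2.mem_diagSet]
  constructor
  · rintro ⟨he, hno⟩
    exact ⟨he, Bool.eq_false_iff.2 fun ht => hno ⟨⟨he, ht⟩, G.not_isDiag_of_mem_edgeSet he⟩⟩
  · rintro ⟨he, hf⟩
    exact ⟨he, fun ⟨⟨_, ht⟩, _⟩ => by simp [hf] at ht⟩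

def edgeSetSdiffOpenSubgraphEquiv (G : SimpleGraph V) (ω : Config G) :
    (G \ openSubgraph G ω).edgeSet ≃ {e : G.edgeSet // ω e = false} :=
  (Equiv.subtypeSubtypeEquivSubtype fun he => (mem_edgeSet_sdiff_openSubgraph.1 he).1).symm.trans
    (Equiv.subtypeEquivRight fun e =>
      mem_edgeSet_sdiff_openSubgraph.trans ⟨fun ⟨_, h⟩ => h, fun h => ⟨e.2, h⟩⟩)

lemma openSubgraph_top_const_true : openSubgraph (⊤ : SimpleGraph V) (fun _ => true) = ⊤ := by
  ext v w
  simp [openSubgraph, and_comm]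

section Markov

variable {Ω ι : Type*} [MeasurableSpace Ω] [Fintype ι]

lemma natCast_mul_measure_le_sum_measure (μ : Measure Ω) {A : ι → Set Ω}
    (hA : ∀ i, MeasurableSet (A i)) {D : Set Ω} {m : ℕ}
    (hD : ∀ ω ∈ D, m ≤ Nat.card {i // ω ∈ A i}) :
    m * μ D ≤ ∑ i, μ (A i) := by
  classical
  set f : Ω → ℝ≥0∞ := fun ω => ∑ i, (A i).indicator 1 ω
  have hf : ∀ ω, f ω = Nat.card {i // ω ∈ A i} := fun ω => by
    simp [f, Set.indicator_apply, Finset.sum_boole, Nat.card_eq_fintype_card,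
      Fintype.card_subtype]
  calc (m : ℝ≥0∞) * μ D ≤ m * μ {ω | (m : ℝ≥0∞) ≤ f ω} := by
        gcongr
        intro ω hω
        rw [Set.mem_ofPred_eq, hf]
        exact_mod_cast hD ω hω
    _ ≤ ∫⁻ ω, f ω ∂μ :=
        mul_meas_ge_le_lintegral
          (Finset.measurable_sum _ fun i _ => measurable_one.indicator (hA i)) _
    _ = ∑ i, μ (A i) := by
        rw [lintegral_finsetSum _ fun i _ => measurable_one.indicator (hA i)]
        simp [lintegral_indicator_one (hA _)]

end Markov

section LowerBound

variable [Fintype V] [DecidableEq V] [Nontrivial V]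

lemma measureReal_not_connected_le {p : ℝ}
    (μ : Measure (Config (⊤ : SimpleGraph V))) [IsProbabilityMeasure μ]
    (hμ : ∀ e, ENNReal.ofReal p ≤ μ {ω | ω e = true}) :
    μ.real {ω | ¬ (openSubgraph ⊤ ω).Connected} ≤ Fintype.card V * (1 - p) / 2 := by
  set D := {ω : Config (⊤ : SimpleGraph V) | ¬ (openSubgraph ⊤ ω).Connected}
  have hclosed_count :
      ∀ ω ∈ D, Fintype.card V - 1 ≤ Nat.card {e // ω ∈ {ω | ω e = false}} := fun ω hω => by
    rw [← Nat.card_eq_fintype_card]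
    refine (natCard_sub_one_le_natCard_compl_edgeSet hω).trans_eq (Nat.card_congr ?_)
    rw [← top_sdiff]
    exact edgeSetSdiffOpenSubgraphEquiv ⊤ ω
  have hmarkov := natCast_mul_measure_le_sum_measure μ (fun _ => .of_discrete) hclosed_count
  have hreal : ((Fintype.card V : ℝ) - 1) * μ.real D ≤ ∑ e, μ.real {ω | ω e = false} := by
    have := ENNReal.toReal_mono (ENNReal.sum_ne_top.2 fun _ _ => measure_ne_top _ _) hmarkov
    rwa [ENNReal.toReal_mul, ENNReal.toReal_sum (fun _ _ => measure_ne_top _ _),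
      ENNReal.toReal_natCast, Nat.cast_sub Fintype.card_pos, Nat.cast_one] at this
  have hclosed : ∀ e, μ.real {ω | ω e = false} ≤ 1 - p := fun e => by
    have hopen := (ENNReal.ofReal_le_iff_le_toReal (measure_ne_top _ _)).1 (hμ e)
    rw [← measureReal_def] at hopen
    have : {ω : Config (⊤ : SimpleGraph V) | ω e = false} = {ω | ω e = true}ᶜ := by ext; simp
    rw [this, probReal_compl_eq_one_sub .of_discrete]
    linarith
  have hcard : Fintype.card (⊤ : SimpleGraph V).edgeSet = (Fintype.card V).choose 2 := by
    rw [← SimpleGraph.edgeFinset_card, SimpleGraph.card_edgeFinset_top_eq_card_choose_two]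
  have hV : (1 : ℝ) < Fintype.card V := by exact_mod_cast Fintype.one_lt_card
  refine le_of_mul_le_mul_left ?_ (sub_pos.2 hV)
  calc ((Fintype.card V : ℝ) - 1) * μ.real D ≤ ∑ e, μ.real {ω | ω e = false} := hreal
    _ ≤ ∑ _e : (⊤ : SimpleGraph V).edgeSet, (1 - p) := Finset.sum_le_sum fun e _ => hclosed e
    _ = ((Fintype.card V : ℝ) - 1) * (Fintype.card V * (1 - p) / 2) := by
        rw [Finset.sum_const, Finset.card_univ, hcard, nsmul_eq_mul, Nat.cast_choose_two]
        ring

lemma one_sub_le_measureReal_connected {k : ℕ} {p : ℝ}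
    {μ : Measure (Config (⊤ : SimpleGraph V))} (hμ : μ ∈ MGe ⊤ k p) :
    1 - Fintype.card V * (1 - p) / 2 ≤ μ.real {ω | (openSubgraph ⊤ ω).Connected} := by
  obtain ⟨hprob, -, hmarg⟩ := hμ
  have hcompl : {ω : Config (⊤ : SimpleGraph V) | (openSubgraph ⊤ ω).Connected} =
      {ω | ¬ (openSubgraph ⊤ ω).Connected}ᶜ := by
    ext; simp
  rw [hcompl, probReal_compl_eq_one_sub .of_discrete]
  linarith [measureReal_not_connected_le μ hmarg]

end LowerBound

section IsolationMeasure

variable [DecidableEq V]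

def isolatingConfig (v : V) : Config (⊤ : SimpleGraph V) := fun e => decide (v ∉ (e : Sym2 V))

lemma isIsolated_openSubgraph_isolatingConfig (v : V) :
    (openSubgraph ⊤ (isolatingConfig v)).IsIsolated v := by
  intro w h
  simp [openSubgraph, isolatingConfig] at h

variable [Fintype V]

lemma natCard_notMem_of_not_isDiag {e : Sym2 V} (he : ¬ e.IsDiag) :
    Nat.card {v // v ∉ e} = Fintype.card V - 2 := by
  rw [Nat.card_eq_fintype_card, Fintype.card_subtype_compl, Fintype.card_subtype,
    ← Sym2.card_toFinset_of_not_isDiag e he]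
  congr 2
  ext
  simp

noncomputable def isolationMeasure (q : ℝ) : Measure (Config (⊤ : SimpleGraph V)) :=
  ENNReal.ofReal (1 - q) • Measure.dirac (fun _ => true) +
    ENNReal.ofReal (q / Fintype.card V) • ∑ v, Measure.dirac (isolatingConfig v)

variable {q : ℝ}

lemma isolationMeasure_real_apply (hq₀ : 0 ≤ q) (hq₁ : q ≤ 1)
    (s : Set (Config (⊤ : SimpleGraph V))) :
    (isolationMeasure q).real s = (1 - q) * s.indicator 1 (fun _ => true) +
      q / Fintype.card V * Nat.card {v // isolatingConfig v ∈ s} := by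
  classical
  have hq : 0 ≤ 1 - q := sub_nonneg.2 hq₁
  have hqn : 0 ≤ q / Fintype.card V := by positivity
  simp only [isolationMeasure, measureReal_def, Measure.add_apply, Measure.smul_apply,
    Measure.coe_finsetSum, Finset.sum_apply, Measure.dirac_apply, Set.indicator_apply,
    Nat.card_eq_fintype_card, Fintype.card_subtype, smul_eq_mul, Pi.one_apply, mul_ite, mul_one,
    mul_zero, Finset.sum_boole]
  split_ifs <;>
    rw [ENNReal.toReal_add (by simp)
      (ENNReal.mul_ne_top ENNReal.ofReal_ne_top (ENNReal.natCast_ne_top _))] <;>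
    simp [ENNReal.toReal_mul, hq, hqn]

lemma isProbabilityMeasure_isolationMeasure [Nonempty V] (hq₀ : 0 ≤ q) (hq₁ : q ≤ 1) :
    IsProbabilityMeasure (isolationMeasure (V := V) q) := by
  refine ⟨(ENNReal.toReal_eq_one_iff _).1 ?_⟩
  rw [← measureReal_def, isolationMeasure_real_apply hq₀ hq₁]
  simp [field]

variable [Nontrivial V]

lemma isolationMeasure_real_connected (hq₀ : 0 ≤ q) (hq₁ : q ≤ 1) :
    (isolationMeasure q).real {ω | (openSubgraph (⊤ : SimpleGraph V) ω).Connected} = 1 - q := by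
  have hdisc : ∀ v : V, ¬ (openSubgraph ⊤ (isolatingConfig v)).Connected := fun v h =>
    h.preconnected.not_isIsolated v (isIsolated_openSubgraph_isolatingConfig v)
  simp [isolationMeasure_real_apply hq₀ hq₁, openSubgraph_top_const_true, hdisc]

lemma isolationMeasure_real_edge_open (hq₀ : 0 ≤ q) (hq₁ : q ≤ 1)
    (e : (⊤ : SimpleGraph V).edgeSet) :
    (isolationMeasure q).real {ω | ω e = true} = 1 - 2 * q / Fintype.card V := by
  have hopen : {v // isolatingConfig v ∈ {ω : Config (⊤ : SimpleGraph V) | ω e = true}} =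
      {v // v ∉ (e : Sym2 V)} := by
    simp [isolatingConfig]
  have hV : (0 : ℝ) < Fintype.card V := by exact_mod_cast Fintype.card_pos
  rw [isolationMeasure_real_apply hq₀ hq₁, hopen,
    natCard_notMem_of_not_isDiag (SimpleGraph.not_isDiag_of_mem_edgeSet _ e.2),
    Nat.cast_sub Fintype.one_lt_card]
  simp
  field_simp
  ring

end IsolationMeasure

theorem connFun_top [Fintype V] [DecidableEq V] [Nontrivial V] {k : ℕ} (hk : 2 ≤ k) {p : ℝ}
    (hp : p ≤ 1) :
    connFun (⊤ : SimpleGraph V) k p = max 0 (1 - Fintype.card V * (1 - p) / 2) := by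
  have hV : (0 : ℝ) < Fintype.card V := by exact_mod_cast Fintype.card_pos
  set q := min 1 (Fintype.card V * (1 - p) / 2)
  have hq₀ : 0 ≤ q := le_min zero_le_one (by nlinarith)
  have hq₁ : q ≤ 1 := min_le_left _ _
  have hq : 2 * q / Fintype.card V ≤ 1 - p := by
    rw [div_le_iff₀ hV]
    linarith [min_le_right 1 (Fintype.card V * (1 - p) / 2)]
  have : IsProbabilityMeasure (isolationMeasure (V := V) q) :=
    isProbabilityMeasure_isolationMeasure hq₀ hq₁
  have hmem : isolationMeasure q ∈ MGe (⊤ : SimpleGraph V) k p := by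
    refine ⟨inferInstance, kIndepMeasure_top hk _, fun e => ?_⟩
    rw [← ENNReal.ofReal_toReal (measure_ne_top _ _), ← measureReal_def,
      isolationMeasure_real_edge_open hq₀ hq₁]
    exact ENNReal.ofReal_le_ofReal (by linarith)
  refine IsLeast.csInf_eq ⟨⟨_, hmem, ?_⟩, ?_⟩
  · rw [← measureReal_def, isolationMeasure_real_connected hq₀ hq₁, ← max_sub_sub_left]
    simp
  · rintro _ ⟨μ, hμ, rfl⟩
    exact max_le ENNReal.toReal_nonneg (one_sub_le_measureReal_connected hμ)

theorem connFun_completeGraph_kIndep (k n : ℕ) (hk : 2 ≤ k) (hn : 2 ≤ n)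
    (p : ℝ) (hp : p ∈ Set.Icc (0:ℝ) 1) :
    connFun (⊤ : SimpleGraph (Fin n)) k p =
      if p ≤ 1 - 2 / n then 0 else 1 - n * (1 - p) / 2 := by
  have : Nontrivial (Fin n) := Fin.nontrivial_iff_two_le.2 hn
  have hn₀ : (0 : ℝ) < n := by positivity
  have hthreshold : p ≤ 1 - 2 / n ↔ 1 - n * (1 - p) / 2 ≤ 0 := by
    rw [le_sub_comm, div_le_iff₀ hn₀]
    constructor <;> intro h <;> linarith
  rw [connFun_top hk hp.2, Fintype.card_fin]
  split_ifs with h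
  · exact max_eq_left (hthreshold.1 h)
  · exact max_eq_right (le_of_not_ge (mt hthreshold.2 h))

end OneIndep
end
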